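/- In the monoid M = IOF_n^par, for all a, b ∈ M: a J b if and only if dom(a) ∼ dom(b), and equivalently a J b if and only if im(a) ∼ im(b). -/

import Mathlib

namespace IOFpar

/-- A partial injection on the chain `{1, …, n}`: a partial function with domain and
image contained in `{1, …, n}` that is injective where defined. -/
structure PInj (n : ℕ) where
  f : ℕ → Option ℕ
  mem_bounds : ∀ ⦃x y : ℕ⦄, f x = some y → x ∈ Finset.Icc 1 n ∧ y ∈ Finset.Icc 1 n
  inj : ∀ ⦃x₁ x₂ y : ℕ⦄, f x₁ = some y → f x₂ = some y → x₁ = x₂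

/-- The domain of a partial injection. -/
def PInj.dom {n : ℕ} (α : PInj n) : Finset ℕ :=
  (Finset.Icc 1 n).filter fun x => (α.f x).isSome

open Classical in
/-- The image of a partial injection. -/
noncomputable def PInj.im {n : ℕ} (α : PInj n) : Finset ℕ :=
  (Finset.Icc 1 n).filter fun y => ∃ x, α.f x = some y

/-- The rank of a partial injection: the size of its domain. -/
def PInj.rank {n : ℕ} (α : PInj n) : ℕ := α.dom.card

/-- The value of `α` at `x` (with junk value `0` outside the domain). -/
def PInj.app {n : ℕ} (α : PInj n) (x : ℕ) : ℕ := (α.f x).getD 0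

/-- Composition of partial injections: `α.comp β` applies `α` first, then `β`
(so it corresponds to the product `αβ` with arguments written on the left). -/
def PInj.comp {n : ℕ} (α β : PInj n) : PInj n where
  f x := (α.f x).bind β.f
  mem_bounds := by
    intro x y h
    rcases Option.bind_eq_some_iff.mp h with ⟨z, hz, hzy⟩
    exact ⟨(α.mem_bounds hz).1, (β.mem_bounds hzy).2⟩
  inj := by
    intro x₁ x₂ y h₁ h₂
    rcases Option.bind_eq_some_iff.mp h₁ with ⟨z₁, hz₁, hz₁y⟩
    rcases Option.bind_eq_some_iff.mp h₂ with ⟨z₂, hz₂, hz₂y⟩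
    obtain rfl : z₁ = z₂ := β.inj hz₁y hz₂y
    exact α.inj hz₁ hz₂

/-- The empty transformation `ε`. -/
def epsilon (n : ℕ) : PInj n where
  f _ := none
  mem_bounds := by intro x y h; simp at h
  inj := by intro x₁ x₂ y h; simp at h

/-- The fence (zig-zag) order on `{1, …, n}`: `k ≺ m` iff `|k - m| = 1`, `k` is odd
and `m` is even. -/
def fence (k m : ℕ) : Prop := (m = k + 1 ∨ k = m + 1) ∧ Odd k ∧ Even m

/-- `IOF n` is the set `IOF_n^par` of all partial injections on `{1, …, n}` that are
order-preserving, parity-preserving, fence-preserving, and whose inverse is also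
fence-preserving. -/
def IOF (n : ℕ) : Set (PInj n) :=
  {α | (∀ ⦃x y x' y' : ℕ⦄, α.f x = some x' → α.f y = some y' → x < y → x' < y') ∧
       (∀ ⦃x y : ℕ⦄, α.f x = some y → x % 2 = y % 2) ∧
       (∀ ⦃x y x' y' : ℕ⦄, α.f x = some x' → α.f y = some y' → fence x y → fence x' y') ∧
       (∀ ⦃x y x' y' : ℕ⦄, α.f x = some x' → α.f y = some y' → fence x' y' → fence x y)}

/-- The increasing enumeration of a finite set of naturals. -/
def sortedList (A : Finset ℕ) : List ℕ := A.sort (· ≤ ·)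

/-- The relation `∼` on subsets of `{1, …, n}`:
`A ∼ B` iff `|A| = |B|`, corresponding elements (in increasing order) have the
same parity, and consecutive elements are at distance 1 in `A` iff they are in `B`. -/
def sim (A B : Finset ℕ) : Prop :=
  A.card = B.card ∧
  (∀ (r : ℕ) (hA : r < (sortedList A).length) (hB : r < (sortedList B).length),
    (sortedList A)[r] % 2 = (sortedList B)[r] % 2) ∧
  (∀ (r : ℕ) (hA : r + 1 < (sortedList A).length) (hB : r + 1 < (sortedList B).length),
    ((sortedList A)[r + 1] = (sortedList A)[r] + 1 ↔
      (sortedList B)[r + 1] = (sortedList B)[r] + 1))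

/-- `P ⊆ P(n̄)` is admissible: it contains `∅`, is convex, and is closed under `∼`. -/
def Admissible (n : ℕ) (P : Set (Finset ℕ)) : Prop :=
  (∀ A ∈ P, A ⊆ Finset.Icc 1 n) ∧
  (∅ : Finset ℕ) ∈ P ∧
  (∀ A ∈ P, ∀ B ∈ P, ∀ C : Finset ℕ, A ⊆ C → C ⊆ B → C ∈ P) ∧
  (∀ y ∈ P, ∀ z : Finset ℕ, z ⊆ Finset.Icc 1 n → sim z y → z ∈ P)

/-- `I_X = {α ∈ IOF_n^par : dom(α) ∈ X}`. -/
def IX (n : ℕ) (X : Set (Finset ℕ)) : Set (PInj n) :=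
  {α | α ∈ IOF n ∧ α.dom ∈ X}

/-- An ideal of the monoid `IOF_n^par`. -/
def IsIdeal (n : ℕ) (I : Set (PInj n)) : Prop :=
  I.Nonempty ∧ I ⊆ IOF n ∧ ∀ a ∈ I, ∀ b ∈ IOF n, a.comp b ∈ I ∧ b.comp a ∈ I

/-- `del y t` is `y^[t+1]` in the paper's (1-based) notation: `y` with its `t`-th
smallest element removed (`t` being 0-based here). -/
def del (y : Finset ℕ) (t : ℕ) : Finset ℕ := y.erase ((sortedList y).getD t 0)

/-- `x ⊑ y`: `x` is obtained from `y` by removing one element. -/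
def sqsub (x y : Finset ℕ) : Prop := ∃ t < y.card, x = del y t

/-- `A_Γ = {Δ ∈ P : Δ ∼ Γ}`. -/
def Aset (P : Set (Finset ℕ)) (Γ : Finset ℕ) : Set (Finset ℕ) :=
  {Δ ∈ P | sim Δ Γ}

/-- `B_Γ = {Δ^[t] : Δ ∈ A_Γ, t ∈ {1,…,|Δ|}}`. -/
def Bset (P : Set (Finset ℕ)) (Γ : Finset ℕ) : Set (Finset ℕ) :=
  {D | ∃ Δ ∈ Aset P Γ, ∃ t < Δ.card, D = del Δ t}

/-- `B = {B_Γ : Γ ∈ P, |Γ| ≥ 2, |A_Γ| ≥ 2}`. -/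
def Bfam (P : Set (Finset ℕ)) : Set (Set (Finset ℕ)) :=
  {E | ∃ Γ ∈ P, 2 ≤ Γ.card ∧ 2 ≤ (Aset P Γ).ncard ∧ E = Bset P Γ}

/-- `C = {{g} : g ∈ P, (g ⊑ y for some y ∈ P with y ≁ z for all z ∈ P \ {y}) or
(g ⋢ z for all z ∈ P)}`. -/
def Cfam (P : Set (Finset ℕ)) : Set (Set (Finset ℕ)) :=
  {D | ∃ g ∈ P, D = {g} ∧
    ((∃ y ∈ P, sqsub g y ∧ ∀ z ∈ P, z ≠ y → ¬ sim y z) ∨ (∀ z ∈ P, ¬ sqsub g z))}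

/-- `BC_{Δ₁} = {Δ ∈ B ∪ C : x ∼ y for all x ∈ Δ, y ∈ Δ₁}`. -/
def BCset (P : Set (Finset ℕ)) (Δ₁ : Set (Finset ℕ)) : Set (Set (Finset ℕ)) :=
  {Δ ∈ Bfam P ∪ Cfam P | ∀ x ∈ Δ, ∀ y ∈ Δ₁, sim x y}

/-- `T_Δ = {c ∈ I_P : dom(c) ∈ Δ, im(c) ∈ Δ}`. -/
def Tset (n : ℕ) (P : Set (Finset ℕ)) (Δ : Set (Finset ℕ)) : Set (PInj n) :=
  {c ∈ IX n P | c.dom ∈ Δ ∧ c.im ∈ Δ}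

/-- `T_Q` for a pair `Q = (Q₁, Q₂)`. -/
def TQ (n : ℕ) (P : Set (Finset ℕ)) (Q₁ Q₂ : Set (Set (Finset ℕ))) : Set (PInj n) :=
  {c ∈ IX n P | (∃ Δ ∈ Q₁, c.dom ∈ Δ) ∧ (∃ Δ ∈ Q₂, c.im ∈ Δ)}

/-- `I_P^u`: the elements of `I_P` that are not expressible in the special product form. -/
def Iu (n : ℕ) (P : Set (Finset ℕ)) : Set (PInj n) :=
  {α ∈ IX n P | ¬ ∃ y₁ ∈ P, ∃ z₁ ∈ P, ∃ y₂ ∈ P, ∃ z₂ ∈ P, ∃ r < y₁.card, ∃ s < y₁.card,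
    y₁.card = z₁.card ∧ 2 ≤ y₁.card ∧
    sim y₂ y₁ ∧ sim z₂ z₁ ∧
    del y₁ r = y₁ ∩ z₁ ∧ del z₁ s = y₁ ∩ z₁ ∧
    sim (del y₂ r) (del z₂ s) ∧ sim (del z₂ s) (y₁ ∩ z₁) ∧
    α.dom = del y₂ r ∧ α.im = del z₂ s}

/-- `T` is a subsemigroup of `S` (a subset of `S` closed under composition). -/
def IsSubsemigroup (n : ℕ) (S T : Set (PInj n)) : Prop :=
  T ⊆ S ∧ ∀ a ∈ T, ∀ b ∈ T, a.comp b ∈ T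

/-- `T` is a maximal subsemigroup of `S`. -/
def IsMaxSubsemigroup (n : ℕ) (S T : Set (PInj n)) : Prop :=
  IsSubsemigroup n S T ∧ T ≠ S ∧
  ∀ U : Set (PInj n), IsSubsemigroup n S U → T ⊆ U → U ⊆ S → U = T ∨ U = S

/-- The left "translate set" `Ma` in the monoid `M = IOF_n^par`. -/
def lset (n : ℕ) (a : PInj n) : Set (PInj n) := {c | ∃ m ∈ IOF n, m.comp a = c}

/-- The right "translate set" `aM` in the monoid `M = IOF_n^par`. -/
def rset (n : ℕ) (a : PInj n) : Set (PInj n) := {c | ∃ m ∈ IOF n, a.comp m = c}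

/-- The two-sided "translate set" `MaM` in the monoid `M = IOF_n^par`. -/
def jset (n : ℕ) (a : PInj n) : Set (PInj n) :=
  {c | ∃ m₁ ∈ IOF n, ∃ m₂ ∈ IOF n, (m₁.comp a).comp m₂ = c}

/-!
If `b = m₁ a m₂` with `m₁, m₂ ∈ IOF_n^par`, then `m₁` maps `dom b` injectively into `dom a`,
so when `a` and `b` divide each other `m₁` maps `dom b` onto `dom a`. An element of
`IOF_n^par` is increasing, keeps parities, and preserves and reflects the successor relation
`y = x + 1` (this is what the fence conditions amount to), and these are exactly the data
compared by `∼`; hence `dom b ∼ dom a`. Conversely, if `dom b ∼ dom a`, the increasing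
bijection `m : dom b → dom a` lies in `IOF_n^par`, and `b = (m a) ((m a)⁻¹ b)`.
Images follow from `dom α ∼ im α`.
-/

section PartialInjection

variable {n : ℕ}

theorem PInj.ext {α β : PInj n} (h : α.f = β.f) : α = β := by
  cases α; cases β; subst h; rfl

theorem PInj.mem_dom {α : PInj n} {x : ℕ} : x ∈ α.dom ↔ ∃ y, α.f x = some y := by
  simp only [PInj.dom, Finset.mem_filter, Option.isSome_iff_exists]
  exact ⟨And.right, fun ⟨y, hy⟩ => ⟨(α.mem_bounds hy).1, y, hy⟩⟩

theorem PInj.f_eq_some_app {α : PInj n} {x : ℕ} (hx : x ∈ α.dom) : α.f x = some (α.app x) := by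
  obtain ⟨y, hy⟩ := PInj.mem_dom.mp hx
  simp [PInj.app, hy]

theorem PInj.injOn_app (α : PInj n) : Set.InjOn α.app α.dom := fun _ hx _ hy hxy =>
  α.inj (PInj.f_eq_some_app hx) (hxy ▸ PInj.f_eq_some_app hy)

theorem PInj.im_eq_image_app (α : PInj n) : α.im = α.dom.image α.app := by
  ext y
  simp only [PInj.im, Finset.mem_filter, Finset.mem_image]
  constructor
  · rintro ⟨-, x, hx⟩
    exact ⟨x, PInj.mem_dom.mpr ⟨y, hx⟩, by simp [PInj.app, hx]⟩
  · rintro ⟨x, hx, rfl⟩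
    exact ⟨(α.mem_bounds (PInj.f_eq_some_app hx)).2, x, PInj.f_eq_some_app hx⟩

theorem PInj.comp_f_eq_some {α β : PInj n} {x z : ℕ} :
    (α.comp β).f x = some z ↔ ∃ y, α.f x = some y ∧ β.f y = some z :=
  Option.bind_eq_some_iff

theorem PInj.mem_dom_comp {α β : PInj n} {x : ℕ} :
    x ∈ (α.comp β).dom ↔ ∃ y, α.f x = some y ∧ y ∈ β.dom := by
  simp only [PInj.mem_dom, PInj.comp_f_eq_some]
  exact ⟨fun ⟨z, y, hy, hz⟩ => ⟨y, hy, z, hz⟩, fun ⟨y, hy, z, hz⟩ => ⟨z, y, hy, hz⟩⟩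

theorem PInj.dom_comp_subset (α β : PInj n) : (α.comp β).dom ⊆ α.dom := fun _ hx =>
  let ⟨y, hy, _⟩ := PInj.mem_dom_comp.mp hx
  PInj.mem_dom.mpr ⟨y, hy⟩

theorem PInj.comp_assoc (α β γ : PInj n) : (α.comp β).comp γ = α.comp (β.comp γ) :=
  PInj.ext <| funext fun x => Option.bind_assoc (α.f x) β.f γ.f

def PInj.one (n : ℕ) : PInj n where
  f x := if x ∈ Finset.Icc 1 n then some x else none
  mem_bounds := by
    intro x y h
    split_ifs at h with hx
    cases h
    exact ⟨hx, hx⟩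
  inj := by
    intro x₁ x₂ y h₁ h₂
    split_ifs at h₁ h₂
    cases h₁
    cases h₂
    rfl

theorem PInj.one_f_eq_some {x y : ℕ} : (PInj.one n).f x = some y ↔ x ∈ Finset.Icc 1 n ∧ x = y := by
  simp [PInj.one]

theorem PInj.one_comp (α : PInj n) : (PInj.one n).comp α = α := by
  refine PInj.ext <| funext fun x => Option.ext fun z => ?_
  rw [PInj.comp_f_eq_some]
  simp only [PInj.one_f_eq_some]
  exact ⟨fun ⟨_, ⟨_, rfl⟩, h⟩ => h, fun h => ⟨x, ⟨(α.mem_bounds h).1, rfl⟩, h⟩⟩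

theorem PInj.comp_one (α : PInj n) : α.comp (PInj.one n) = α := by
  refine PInj.ext <| funext fun x => Option.ext fun z => ?_
  rw [PInj.comp_f_eq_some]
  simp only [PInj.one_f_eq_some]
  exact ⟨fun ⟨_, h, _, rfl⟩ => h, fun h => ⟨z, h, (α.mem_bounds h).2, rfl⟩⟩

open Classical in
noncomputable def PInj.inv (α : PInj n) : PInj n where
  f y := if h : ∃ x, α.f x = some y then some h.choose else none
  mem_bounds := by
    intro y x h
    split_ifs at h with hy
    cases h
    exact (α.mem_bounds hy.choose_spec).symm
  inj := by
    intro y₁ y₂ x h₁ h₂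
    split_ifs at h₁ h₂ with hy₁ hy₂
    cases h₁
    have := hy₁.choose_spec
    rw [← Option.some_inj.mp h₂, hy₂.choose_spec] at this
    exact (Option.some_inj.mp this).symm

theorem PInj.inv_f_eq_some {α : PInj n} {x y : ℕ} : α.inv.f y = some x ↔ α.f x = some y := by
  classical
  constructor
  · intro h
    simp only [PInj.inv] at h
    split_ifs at h with hy
    exact Option.some_inj.mp h ▸ hy.choose_spec
  · intro h
    have hy : ∃ x, α.f x = some y := ⟨x, h⟩
    simp only [PInj.inv, dif_pos hy]
    exact congrArg some (α.inj hy.choose_spec h)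

/-- `α α⁻¹` is the identity on `dom α`, so it fixes every `β` with `dom β ⊆ dom α`. -/
theorem PInj.comp_inv_comp {α β : PInj n} (h : β.dom ⊆ α.dom) : α.comp (α.inv.comp β) = β := by
  refine PInj.ext <| funext fun x => ?_
  show (α.f x).bind (fun y => (α.inv.f y).bind β.f) = β.f x
  cases hx : α.f x with
  | none =>
    by_contra hβ
    obtain ⟨z, hz⟩ := Option.ne_none_iff_exists'.mp (Ne.symm hβ)
    obtain ⟨y, hy⟩ := PInj.mem_dom.mp (h (PInj.mem_dom.mpr ⟨z, hz⟩))
    simp [hx] at hy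
  | some y => simp [PInj.inv_f_eq_some.mpr hx]

end PartialInjection

section SortedList

theorem length_sortedList (A : Finset ℕ) : (sortedList A).length = A.card :=
  Finset.length_sort _

theorem mem_sortedList {A : Finset ℕ} {x : ℕ} : x ∈ sortedList A ↔ x ∈ A :=
  Finset.mem_sort _

theorem nodup_sortedList (A : Finset ℕ) : (sortedList A).Nodup :=
  Finset.sort_nodup _ _

theorem getElem_sortedList_mem {A : Finset ℕ} {r : ℕ} (h : r < (sortedList A).length) :
    (sortedList A)[r] ∈ A :=
  mem_sortedList.mp (List.getElem_mem h)

theorem getElem_sortedList_lt_iff {A : Finset ℕ} {i j : ℕ} (hi : i < (sortedList A).length)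
    (hj : j < (sortedList A).length) : (sortedList A)[i] < (sortedList A)[j] ↔ i < j :=
  (Finset.sortedLT_sort A).strictMono_get.lt_iff_lt (a := ⟨i, hi⟩) (b := ⟨j, hj⟩)

theorem eq_add_one_of_getElem_sortedList {A : Finset ℕ} {i j : ℕ}
    (hi : i < (sortedList A).length) (hj : j < (sortedList A).length)
    (h : (sortedList A)[j] = (sortedList A)[i] + 1) : j = i + 1 := by
  have hij : i < j := (getElem_sortedList_lt_iff hi hj).mp (by omega)
  by_contra hne
  have := (getElem_sortedList_lt_iff (j := i + 1) hi (by omega)).mpr (by omega)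
  have := (getElem_sortedList_lt_iff (i := i + 1) (by omega) hj).mpr (by omega)
  omega

theorem sortedList_image {A : Finset ℕ} {f : ℕ → ℕ} (hf : StrictMonoOn f A) :
    sortedList (A.image f) = (sortedList A).map f := by
  simp only [sortedList, Finset.sort, Finset.image_val_of_injOn hf.injOn]
  exact (Multiset.map_sort f A.val _ _ fun a ha b hb => (hf.le_iff_le ha hb).symm).symm

end SortedList

section Sim

theorem sim_symm {A B : Finset ℕ} (h : sim A B) : sim B A :=
  ⟨h.1.symm, fun r hB hA => (h.2.1 r hA hB).symm, fun r hB hA => (h.2.2 r hA hB).symm⟩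

theorem sim_trans {A B C : Finset ℕ} (hAB : sim A B) (hBC : sim B C) : sim A C := by
  obtain ⟨hcard₁, hpar₁, hsucc₁⟩ := hAB
  obtain ⟨hcard₂, hpar₂, hsucc₂⟩ := hBC
  have hlen : (sortedList A).length = (sortedList B).length := by
    simp only [length_sortedList, hcard₁]
  refine ⟨hcard₁.trans hcard₂, fun r hA hC => ?_, fun r hA hC => ?_⟩
  · exact (hpar₁ r hA (hlen ▸ hA)).trans (hpar₂ r (hlen ▸ hA) hC)
  · exact (hsucc₁ r hA (hlen ▸ hA)).trans (hsucc₂ r (hlen ▸ hA) hC)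

theorem sim_congr {A A' B B' : Finset ℕ} (hA : sim A A') (hB : sim B B') :
    sim A B ↔ sim A' B' :=
  ⟨fun h => sim_trans (sim_trans (sim_symm hA) h) hB,
    fun h => sim_trans (sim_trans hA h) (sim_symm hB)⟩

theorem sim_image {A : Finset ℕ} {f : ℕ → ℕ} (hf : StrictMonoOn f A)
    (hpar : ∀ x ∈ A, x % 2 = f x % 2)
    (hsucc : ∀ x ∈ A, ∀ y ∈ A, y = x + 1 ↔ f y = f x + 1) :
    sim A (A.image f) := by
  have hmap := sortedList_image hf
  have hlen : (sortedList (A.image f)).length = (sortedList A).length := by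
    rw [hmap, List.length_map]
  have hget : ∀ r (h : r < (sortedList (A.image f)).length),
      (sortedList (A.image f))[r] = f (sortedList A)[r] := fun r h => by
    simp only [List.getElem_of_eq hmap h, List.getElem_map]
  refine ⟨by simpa only [length_sortedList] using hlen.symm, fun r hA hB => ?_,
    fun r hA hB => ?_⟩
  · rw [hget r hB]
    exact hpar _ (getElem_sortedList_mem hA)
  · rw [hget _ hB, hget r (by omega)]
    exact hsucc _ (getElem_sortedList_mem _) _ (getElem_sortedList_mem hA)

end Sim

section IOF

variable {n : ℕ}

theorem fence_iff {k m : ℕ} : fence k m ↔ (m = k + 1 ∨ k = m + 1) ∧ k % 2 = 1 ∧ m % 2 = 0 := by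
  simp only [fence, Nat.odd_iff, Nat.even_iff]

theorem PInj.lt_iff_lt_of_mono {m : PInj n}
    (hmono : ∀ ⦃x y x' y' : ℕ⦄, m.f x = some x' → m.f y = some y' → x < y → x' < y')
    {x y x' y' : ℕ} (hx : m.f x = some x') (hy : m.f y = some y') : x < y ↔ x' < y' := by
  refine ⟨hmono hx hy, fun h => ?_⟩
  rcases lt_trichotomy x y with hlt | rfl | hgt
  · exact hlt
  · cases hx.symm.trans hy
    exact absurd h (lt_irrefl _)
  · exact absurd (hmono hy hx hgt) h.asymm

theorem mem_IOF_iff {m : PInj n} : m ∈ IOF n ↔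
    (∀ ⦃x y x' y' : ℕ⦄, m.f x = some x' → m.f y = some y' → x < y → x' < y') ∧
    (∀ ⦃x y : ℕ⦄, m.f x = some y → x % 2 = y % 2) ∧
    (∀ ⦃x y x' y' : ℕ⦄, m.f x = some x' → m.f y = some y' → (y = x + 1 ↔ y' = x' + 1)) := by
  refine ⟨fun ⟨hmono, hpar, hfence, hfence'⟩ => ⟨hmono, hpar, ?_⟩,
    fun ⟨hmono, hpar, hsucc⟩ => ⟨hmono, hpar, ?_, ?_⟩⟩
  · intro x y x' y' hx hy
    have := PInj.lt_iff_lt_of_mono hmono hx hy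
    have := hpar hx; have := hpar hy
    have := hfence hx hy; have := hfence hy hx; have := hfence' hx hy; have := hfence' hy hx
    simp only [fence_iff] at *
    omega
  all_goals
    intro x y x' y' hx hy
    have := hsucc hx hy; have := hsucc hy hx
    have := hpar hx; have := hpar hy
    simp only [fence_iff]
    omega

theorem PInj.one_mem_IOF : PInj.one n ∈ IOF n := by
  refine mem_IOF_iff.mpr ⟨?_, ?_, ?_⟩ <;>
  · intros
    simp only [PInj.one_f_eq_some] at *
    omega

theorem PInj.comp_mem_IOF {α β : PInj n} (hα : α ∈ IOF n) (hβ : β ∈ IOF n) :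
    α.comp β ∈ IOF n := by
  obtain ⟨hmono₁, hpar₁, hsucc₁⟩ := mem_IOF_iff.mp hα
  obtain ⟨hmono₂, hpar₂, hsucc₂⟩ := mem_IOF_iff.mp hβ
  refine mem_IOF_iff.mpr ⟨fun x y x' y' hx hy => ?_, fun x y hx => ?_, fun x y x' y' hx hy => ?_⟩
    <;> obtain ⟨u, hxu, hux⟩ := PInj.comp_f_eq_some.mp hx
  · obtain ⟨v, hyv, hvy⟩ := PInj.comp_f_eq_some.mp hy
    exact fun h => hmono₂ hux hvy (hmono₁ hxu hyv h)
  · exact (hpar₁ hxu).trans (hpar₂ hux)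
  · obtain ⟨v, hyv, hvy⟩ := PInj.comp_f_eq_some.mp hy
    exact (hsucc₁ hxu hyv).trans (hsucc₂ hux hvy)

theorem PInj.inv_mem_IOF {α : PInj n} (hα : α ∈ IOF n) : α.inv ∈ IOF n := by
  obtain ⟨hmono, hpar, hsucc⟩ := mem_IOF_iff.mp hα
  refine mem_IOF_iff.mpr ⟨fun x y x' y' hx hy => ?_, fun x y hx => ?_, fun x y x' y' hx hy => ?_⟩
    <;> rw [PInj.inv_f_eq_some] at hx
  · exact (PInj.lt_iff_lt_of_mono hmono hx (PInj.inv_f_eq_some.mp hy)).mpr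
  · exact (hpar hx).symm
  · exact (hsucc hx (PInj.inv_f_eq_some.mp hy)).symm

theorem sim_image_app {m : PInj n} (hm : m ∈ IOF n) {A : Finset ℕ} (hA : A ⊆ m.dom) :
    sim A (A.image m.app) := by
  obtain ⟨hmono, hpar, hsucc⟩ := mem_IOF_iff.mp hm
  have hf : ∀ x ∈ A, m.f x = some (m.app x) := fun x hx => PInj.f_eq_some_app (hA hx)
  exact sim_image (fun x hx y hy => hmono (hf x hx) (hf y hy))
    (fun x hx => hpar (hf x hx)) (fun x hx y hy => hsucc (hf x hx) (hf y hy))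

theorem sim_dom_im {α : PInj n} (hα : α ∈ IOF n) : sim α.dom α.im :=
  α.im_eq_image_app ▸ sim_image_app hα subset_rfl

/-- The order-preserving partial injection sending the `r`-th smallest element of `A` to the
`r`-th smallest element of `B`, for as long as both exist. -/
def canonMap (A B : Finset ℕ) (hA : A ⊆ Finset.Icc 1 n) (hB : B ⊆ Finset.Icc 1 n) : PInj n where
  f x := if x ∈ A then (sortedList B)[(sortedList A).idxOf x]? else none
  mem_bounds := by
    intro x y h
    split_ifs at h with hx
    exact ⟨hA hx, hB (mem_sortedList.mp (List.mem_of_getElem? h))⟩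
  inj := by
    intro x₁ x₂ y h₁ h₂
    split_ifs at h₁ h₂ with hx₁ hx₂
    have hlt : (sortedList A).idxOf x₁ < (sortedList B).length :=
      (List.getElem?_eq_some_iff.mp h₁).1
    have hidx := (List.getElem?_inj hlt (nodup_sortedList B)).mp (h₁.trans h₂.symm)
    exact (List.idxOf_inj (mem_sortedList.mpr hx₁)).mp hidx

theorem canonMap_f_eq_some {A B : Finset ℕ} {hA : A ⊆ Finset.Icc 1 n} {hB : B ⊆ Finset.Icc 1 n}
    {x y : ℕ} : (canonMap A B hA hB).f x = some y ↔
      ∃ (r : ℕ) (hrA : r < (sortedList A).length) (hrB : r < (sortedList B).length),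
        (sortedList A)[r] = x ∧ (sortedList B)[r] = y := by
  simp only [canonMap]
  constructor
  · intro h
    split_ifs at h with hx
    obtain ⟨hrB, hy⟩ := List.getElem?_eq_some_iff.mp h
    have hrA := List.idxOf_lt_length_iff.mpr (mem_sortedList.mpr hx)
    exact ⟨_, hrA, hrB, List.getElem_idxOf hrA, hy⟩
  · rintro ⟨r, hrA, hrB, rfl, rfl⟩
    rw [if_pos (getElem_sortedList_mem hrA),
      (nodup_sortedList A).idxOf_getElem r hrA, List.getElem?_eq_getElem hrB]

theorem exists_canonMap_f_eq_some {A B : Finset ℕ} {hA : A ⊆ Finset.Icc 1 n}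
    {hB : B ⊆ Finset.Icc 1 n} (hcard : A.card ≤ B.card) {x : ℕ} (hx : x ∈ A) :
    ∃ y ∈ B, (canonMap A B hA hB).f x = some y := by
  obtain ⟨r, hr, rfl⟩ := List.getElem_of_mem (mem_sortedList.mpr hx)
  have hrB : r < (sortedList B).length := by
    simp only [length_sortedList] at hr ⊢
    omega
  exact ⟨_, getElem_sortedList_mem hrB, canonMap_f_eq_some.mpr ⟨r, hr, hrB, rfl, rfl⟩⟩

theorem canonMap_mem_IOF {A B : Finset ℕ} (hA : A ⊆ Finset.Icc 1 n) (hB : B ⊆ Finset.Icc 1 n)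
    (h : sim A B) : canonMap A B hA hB ∈ IOF n := by
  obtain ⟨-, hpar, hsucc⟩ := h
  refine mem_IOF_iff.mpr ⟨fun x y x' y' hx hy => ?_, fun x y hx => ?_, fun x y x' y' hx hy => ?_⟩
    <;> obtain ⟨r, hrA, hrB, rfl, rfl⟩ := canonMap_f_eq_some.mp hx
  · obtain ⟨s, hsA, hsB, rfl, rfl⟩ := canonMap_f_eq_some.mp hy
    rw [getElem_sortedList_lt_iff, getElem_sortedList_lt_iff]
    exact id
  · exact hpar r hrA hrB
  · obtain ⟨s, hsA, hsB, rfl, rfl⟩ := canonMap_f_eq_some.mp hy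
    constructor
    · intro hs
      obtain rfl := eq_add_one_of_getElem_sortedList hrA hsA hs
      exact (hsucc r hsA hsB).mp hs
    · intro hs
      obtain rfl := eq_add_one_of_getElem_sortedList hrB hsB hs
      exact (hsucc r hsA hsB).mpr hs

end IOF

section GreenJ

variable {n : ℕ}

theorem mem_jset_self (a : PInj n) : a ∈ jset n a :=
  ⟨_, PInj.one_mem_IOF, _, PInj.one_mem_IOF, by rw [PInj.one_comp, PInj.comp_one]⟩

theorem jset_subset_of_mem {a b : PInj n} (h : b ∈ jset n a) : jset n b ⊆ jset n a := by
  rintro c ⟨m₁, hm₁, m₂, hm₂, rfl⟩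
  obtain ⟨k₁, hk₁, k₂, hk₂, rfl⟩ := h
  refine ⟨m₁.comp k₁, PInj.comp_mem_IOF hm₁ hk₁, k₂.comp m₂, PInj.comp_mem_IOF hk₂ hm₂, ?_⟩
  simp only [PInj.comp_assoc]

theorem exists_mem_IOF_of_mem_jset {a b : PInj n} (h : b ∈ jset n a) :
    ∃ m ∈ IOF n, b.dom ⊆ m.dom ∧ b.dom.image m.app ⊆ a.dom := by
  obtain ⟨m₁, hm₁, m₂, -, rfl⟩ := h
  have hsub : (m₁.comp a).dom ⊆ m₁.dom := PInj.dom_comp_subset _ _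
  refine ⟨m₁, hm₁, (PInj.dom_comp_subset _ _).trans hsub, ?_⟩
  rw [Finset.image_subset_iff]
  intro x hx
  obtain ⟨y, hy, hya⟩ := PInj.mem_dom_comp.mp (PInj.dom_comp_subset _ _ hx)
  simpa only [PInj.app, hy, Option.getD_some] using hya

theorem card_dom_le_of_mem_jset {a b : PInj n} (h : b ∈ jset n a) : b.dom.card ≤ a.dom.card :=
  let ⟨m, _, hdom, himage⟩ := exists_mem_IOF_of_mem_jset h
  Finset.card_le_card_of_injOn m.app (fun _ hx => himage (Finset.mem_image_of_mem _ hx))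
    (m.injOn_app.mono hdom)

theorem sim_dom_of_mem_jset {a b : PInj n} (hab : a ∈ jset n b) (hba : b ∈ jset n a) :
    sim b.dom a.dom := by
  obtain ⟨m, hm, hdom, himage⟩ := exists_mem_IOF_of_mem_jset hba
  have hcard : a.dom.card ≤ (b.dom.image m.app).card := by
    rw [Finset.card_image_of_injOn (m.injOn_app.mono hdom)]
    exact card_dom_le_of_mem_jset hab
  exact Finset.eq_of_subset_of_card_le himage hcard ▸ sim_image_app hm hdom

theorem mem_jset_of_sim_dom {a b : PInj n} (ha : a ∈ IOF n) (hb : b ∈ IOF n)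
    (h : sim b.dom a.dom) : b ∈ jset n a := by
  set m := canonMap b.dom a.dom (Finset.filter_subset _ _) (Finset.filter_subset _ _)
  have hm : m ∈ IOF n := canonMap_mem_IOF _ _ h
  have hdom : b.dom ⊆ (m.comp a).dom := fun x hx => by
    obtain ⟨y, hya, hy⟩ := exists_canonMap_f_eq_some h.1.le hx
    exact PInj.mem_dom_comp.mpr ⟨y, hy, hya⟩
  exact ⟨m, hm, _, PInj.comp_mem_IOF (PInj.inv_mem_IOF (PInj.comp_mem_IOF hm ha)) hb,
    PInj.comp_inv_comp hdom⟩

theorem jset_eq_iff_sim_dom {a b : PInj n} (ha : a ∈ IOF n) (hb : b ∈ IOF n) :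
    jset n a = jset n b ↔ sim a.dom b.dom := by
  refine ⟨fun h => ?_, fun h => ?_⟩
  · have hab : a ∈ jset n b := h ▸ mem_jset_self a
    have hba : b ∈ jset n a := h.symm ▸ mem_jset_self b
    exact sim_dom_of_mem_jset hba hab
  · exact (jset_subset_of_mem (mem_jset_of_sim_dom hb ha h)).antisymm
      (jset_subset_of_mem (mem_jset_of_sim_dom ha hb (sim_symm h)))

end GreenJ

theorem statement_6_general (n : ℕ) (a b : PInj n)
    (ha : a ∈ IOF n) (hb : b ∈ IOF n) :
    (jset n a = jset n b ↔ sim a.dom b.dom) ∧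
    (jset n a = jset n b ↔ sim a.im b.im) := by
  have hdom := jset_eq_iff_sim_dom ha hb
  exact ⟨hdom, hdom.trans (sim_congr (sim_dom_im ha) (sim_dom_im hb))⟩

/-- Green's relation `J` on the monoid `M = IOF_n^par`:
`a J b` iff `dom(a) ∼ dom(b)`, and equivalently iff `im(a) ∼ im(b)`. -/
theorem statement_6 (n : ℕ) (hn : 0 < n) (a b : PInj n)
    (ha : a ∈ IOF n) (hb : b ∈ IOF n) :
    (jset n a = jset n b ↔ sim a.dom b.dom) ∧
    (jset n a = jset n b ↔ sim a.im b.im) :=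
  statement_6_general n a b ha hb

end IOFpar
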